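/- There exists a constant C > 0 (depending only on q and a) such that for every integer m ≥ 1, |∫₀^a (Q(x) − Q₀)² q(x) e^{−2(2m+2)π i x/a} dx| ≤ C ρ(m). -/

import Mathlib

open MeasureTheory Filter Set intervalIntegral

noncomputable section

/-- The complex exponential `e^{2π i n x / a}`. -/
def e2 (a : ℝ) (n : ℤ) (x : ℝ) : ℂ :=
  Complex.exp (((2 * Real.pi * n * x / a : ℝ) : ℂ) * Complex.I)

/-- The `n`-th Fourier coefficient `c_n = (1/a) ∫₀^a q(x) e^{-2π i n x/a} dx`. -/
def fc (a : ℝ) (q : ℝ → ℝ) (n : ℤ) : ℂ :=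
  (1 / (a : ℂ)) * ∫ x in (0:ℝ)..a, (q x : ℂ) * e2 a (-n) x

/-- `ρ(m)`: the maximum of the two uniform norms of `x ↦ ∫₀ˣ q(t) e^{∓2(2m+2)π i t/a} dt`. -/
def rho (a : ℝ) (q : ℝ → ℝ) (m : ℕ) : ℝ :=
  max (⨆ x : Set.Icc (0:ℝ) a, ‖∫ t in (0:ℝ)..(x : ℝ), (q t : ℂ) * e2 a (-(2*(m:ℤ)+2)) t‖)
      (⨆ x : Set.Icc (0:ℝ) a, ‖∫ t in (0:ℝ)..(x : ℝ), (q t : ℂ) * e2 a (2*(m:ℤ)+2) t‖)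

/-- `Q(x) = (1/a) ∫₀ˣ q(t) dt`. -/
def Qf (a : ℝ) (q : ℝ → ℝ) (x : ℝ) : ℝ :=
  (1 / a) * ∫ t in (0:ℝ)..x, q t

/-- `Q₀ = (1/a) ∫₀^a Q(x) dx`. -/
def Q0 (a : ℝ) (q : ℝ → ℝ) : ℝ :=
  (1 / a) * ∫ x in (0:ℝ)..a, Qf a q x

/-- `G⁺(x,m) = (1/a)∫₀ˣ q(t) e^{-2(2m+2)π i t/a} dt − (c_{2m+2}/a) x`. -/
def Gp (a : ℝ) (q : ℝ → ℝ) (m : ℕ) (x : ℝ) : ℂ :=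
  (1 / (a : ℂ)) * (∫ t in (0:ℝ)..x, (q t : ℂ) * e2 a (-(2*(m:ℤ)+2)) t)
    - (fc a q (2*(m:ℤ)+2) / a) * x

/-- `G⁻(x,m) = (1/a)∫₀ˣ q(t) e^{+2(2m+2)π i t/a} dt − (c_{−(2m+2)}/a) x`. -/
def Gm (a : ℝ) (q : ℝ → ℝ) (m : ℕ) (x : ℝ) : ℂ :=
  (1 / (a : ℂ)) * (∫ t in (0:ℝ)..x, (q t : ℂ) * e2 a (2*(m:ℤ)+2) t)
    - (fc a q (-(2*(m:ℤ)+2)) / a) * x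

/-- `G₀⁺(m) = (1/a) ∫₀^a G⁺(x,m) dx`. -/
def Gp0 (a : ℝ) (q : ℝ → ℝ) (m : ℕ) : ℂ :=
  (1 / (a : ℂ)) * ∫ x in (0:ℝ)..a, Gp a q m x

/-- `G₀⁻(m) = (1/a) ∫₀^a G⁻(x,m) dx`. -/
def Gm0 (a : ℝ) (q : ℝ → ℝ) (m : ℕ) : ℂ :=
  (1 / (a : ℂ)) * ∫ x in (0:ℝ)..a, Gm a q m x

/-- The pairing `(f,g) = (1/a) ∫₀^a f(x) conj(g(x)) dx`. -/
def ip (a : ℝ) (f g : ℝ → ℂ) : ℂ :=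
  (1 / (a : ℂ)) * ∫ x in (0:ℝ)..a, f x * (starRingEnd ℂ) (g x)

/-- `ν_j = ((2j+2)π/a)²`. -/
def nuZ (a : ℝ) (j : ℤ) : ℝ :=
  ((2 * (j : ℝ) + 2) * Real.pi / a) ^ 2

/-- `Ψ` is an eigenfunction of `y'' + (λ − q) y = 0` with the periodic boundary
conditions `y(0) = y(a)`, `y'(0) = y'(a)`: `Ψ` is not identically zero, continuously
differentiable, `Ψ'` is absolutely continuous on `[0,a]` (i.e. it is the integral of
an integrable function `Ψ''`), and the equation holds a.e. on `[0,a]`. -/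
def IsEigenfunc (a : ℝ) (q : ℝ → ℝ) (lam : ℝ) (Ψ : ℝ → ℂ) : Prop :=
  (∃ x ∈ Set.Icc (0:ℝ) a, Ψ x ≠ 0) ∧
  ∃ Ψ' Ψ'' : ℝ → ℂ,
    (∀ x, HasDerivAt Ψ (Ψ' x) x) ∧ Continuous Ψ' ∧
    MeasureTheory.IntegrableOn Ψ'' (Set.Icc 0 a) ∧
    (∀ x ∈ Set.Icc (0:ℝ) a, Ψ' x = Ψ' 0 + ∫ t in (0:ℝ)..x, Ψ'' t) ∧
    (∀ᵐ x ∂(MeasureTheory.volume.restrict (Set.Icc (0:ℝ) a)),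
      Ψ'' x + ((lam : ℂ) - (q x : ℂ)) * Ψ x = 0) ∧
    Ψ 0 = Ψ a ∧ Ψ' 0 = Ψ' a

/-- `λ` is a periodic eigenvalue if it has an eigenfunction. -/
def IsPeriodicEV (a : ℝ) (q : ℝ → ℝ) (lam : ℝ) : Prop :=
  ∃ Ψ : ℝ → ℂ, IsEigenfunc a q lam Ψ

end

/-!
Write `g = (Q - Q₀)²`; it is absolutely continuous because `Q` is a primitive of `q / a`.
Integrating by parts against the primitive `F(x) = ∫₀ˣ q(t) e^{-2(2m+2)π i t/a} dt` gives
`∫₀^a g q e = g(a) F(a) - ∫₀^a g' F`, and `|F| ≤ ρ(m)` on `[0,a]`, so the integral is at most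
`(|g(a)| + ‖g'‖₁) ρ(m)`, up to a factor `2` from splitting `F` into real and imaginary parts.
-/

theorem abs_integral_mul_le_of_abs_primitive_le {g u : ℝ → ℝ} {a b R : ℝ} (hab : a ≤ b)
    (hg : AbsolutelyContinuousOnInterval g a b) (hu : IntervalIntegrable u volume a b)
    (hR : ∀ x ∈ Icc a b, |∫ t in a..x, u t| ≤ R) :
    |∫ x in a..b, g x * u x| ≤ (|g b| + ∫ x in a..b, |deriv g x|) * R := by
  set U : ℝ → ℝ := fun x => ∫ t in a..x, u t
  have hU : AbsolutelyContinuousOnInterval U a b :=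
    hu.absolutelyContinuousOnInterval_intervalIntegral left_mem_uIcc
  have hu_deriv : ∫ x in a..b, g x * u x = ∫ x in a..b, g x * deriv U x := by
    refine integral_congr_ae ?_
    filter_upwards [hu.ae_hasDerivAt_integral] with x hx hxab
    rw [(hx (uIoc_subset_uIcc hxab) a left_mem_uIcc).deriv]
  have hUb : |U b| ≤ R := hR b ⟨hab, le_rfl⟩
  have hrest : |∫ x in a..b, deriv g x * U x| ≤ ∫ x in a..b, |deriv g x| * R :=
    norm_integral_le_of_norm_le hab
      (ae_of_all _ fun x hx => by
        rw [Real.norm_eq_abs, abs_mul]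
        exact mul_le_mul_of_nonneg_left (hR x (Ioc_subset_Icc_self hx)) (abs_nonneg _))
      (hg.intervalIntegrable_deriv.abs.mul_const R)
  rw [intervalIntegral.integral_mul_const] at hrest
  have hUa : U a = 0 := integral_same
  rw [hu_deriv, hg.integral_mul_deriv_eq_deriv_mul hU, hUa, mul_zero, sub_zero]
  calc |g b * U b - ∫ x in a..b, deriv g x * U x|
      ≤ |g b| * |U b| + |∫ x in a..b, deriv g x * U x| := by
        rw [← abs_mul]; exact abs_sub _ _
    _ ≤ |g b| * R + (∫ x in a..b, |deriv g x|) * R := by gcongr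
    _ = (|g b| + ∫ x in a..b, |deriv g x|) * R := by ring

theorem norm_integral_ofReal_mul_le_of_norm_primitive_le {g : ℝ → ℝ} {h : ℝ → ℂ} {a b R : ℝ}
    (hab : a ≤ b) (hg : AbsolutelyContinuousOnInterval g a b)
    (hh : IntervalIntegrable h volume a b) (hR : ∀ x ∈ Icc a b, ‖∫ t in a..x, h t‖ ≤ R) :
    ‖∫ x in a..b, (g x : ℂ) * h x‖ ≤ 2 * (|g b| + ∫ x in a..b, |deriv g x|) * R := by
  have hgh : IntervalIntegrable (fun x => (g x : ℂ) * h x) volume a b :=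
    hh.continuousOn_mul (Complex.continuous_ofReal.comp_continuousOn hg.continuousOn)
  have hh_le : ∀ x ∈ Icc a b, IntervalIntegrable h volume a x := fun x hx =>
    hh.mono_set (uIcc_subset_uIcc left_mem_uIcc (mem_uIcc_of_le hx.1 hx.2))
  have hre := abs_integral_mul_le_of_abs_primitive_le hab hg
    (u := fun x => (h x).re) ⟨hh.1.re, hh.2.re⟩ fun x hx =>
      (congrArg abs (intervalIntegral_re (hh_le x hx))).trans_le
        ((Complex.abs_re_le_norm _).trans (hR x hx))
  have him := abs_integral_mul_le_of_abs_primitive_le hab hg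
    (u := fun x => (h x).im) ⟨hh.1.im, hh.2.im⟩ fun x hx =>
      (congrArg abs (intervalIntegral_im (hh_le x hx))).trans_le
        ((Complex.abs_im_le_norm _).trans (hR x hx))
  have hre_eq : ∫ x in a..b, g x * (h x).re = (∫ x in a..b, (g x : ℂ) * h x).re := by
    simp only [← Complex.re_ofReal_mul]
    exact intervalIntegral_re hgh
  have him_eq : ∫ x in a..b, g x * (h x).im = (∫ x in a..b, (g x : ℂ) * h x).im := by
    simp only [← Complex.im_ofReal_mul]
    exact intervalIntegral_im hgh
  rw [hre_eq] at hre
  rw [him_eq] at him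
  linarith [Complex.norm_le_abs_re_add_abs_im (∫ x in a..b, (g x : ℂ) * h x)]

theorem continuous_e2 (a : ℝ) (n : ℤ) : Continuous (e2 a n) := by
  unfold e2
  fun_prop

theorem integrableOn_mul_e2 {a : ℝ} {q : ℝ → ℝ} (hq : IntegrableOn q (Icc 0 a)) (n : ℤ) :
    IntegrableOn (fun t => (q t : ℂ) * e2 a n t) (Icc 0 a) :=
  IntegrableOn.mul_continuousOn (Integrable.ofReal hq) (continuous_e2 a n).continuousOn
    isCompact_Icc

theorem norm_primitive_le_rho {a : ℝ} {q : ℝ → ℝ} (hq : IntegrableOn q (Icc 0 a)) (m : ℕ) :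
    ∀ x ∈ Icc (0:ℝ) a, ‖∫ t in (0:ℝ)..x, (q t : ℂ) * e2 a (-(2*(m:ℤ)+2)) t‖ ≤ rho a q m := by
  intro x hx
  have ha : 0 ≤ a := hx.1.trans hx.2
  have hcont : ContinuousOn
      (fun x => ∫ t in (0:ℝ)..x, (q t : ℂ) * e2 a (-(2*(m:ℤ)+2)) t) (Icc 0 a) := by
    rw [← uIcc_of_le ha]
    exact continuousOn_primitive_interval (by rw [uIcc_of_le ha]; exact integrableOn_mul_e2 hq _)
  have hbdd : BddAbove (range fun x : Icc (0:ℝ) a =>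
      ‖∫ t in (0:ℝ)..(x : ℝ), (q t : ℂ) * e2 a (-(2*(m:ℤ)+2)) t‖) := by
    simpa only [image_eq_range] using isCompact_Icc.bddAbove_image hcont.norm
  exact (le_ciSup hbdd ⟨x, hx⟩).trans (le_max_left _ _)

theorem absolutelyContinuousOnInterval_Qf {a : ℝ} {q : ℝ → ℝ}
    (hq : IntervalIntegrable q volume 0 a) : AbsolutelyContinuousOnInterval (Qf a q) 0 a :=
  (hq.absolutelyContinuousOnInterval_intervalIntegral left_mem_uIcc).const_mul (1 / a)

theorem statement13_general (a : ℝ) (ha : 0 < a) (q : ℝ → ℝ)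
    (hq : MeasureTheory.IntegrableOn q (Set.Icc 0 a)) :
    ∃ C > (0:ℝ), ∀ m : ℕ, 1 ≤ m →
      ‖∫ x in (0:ℝ)..a, (((Qf a q x - Q0 a q : ℝ)) : ℂ)^2 * ((q x : ℝ) : ℂ)
          * e2 a (-(2*(m:ℤ)+2)) x‖
        ≤ C * rho a q m := by
  set g : ℝ → ℝ := fun x => (Qf a q x - Q0 a q) ^ 2
  have hg : AbsolutelyContinuousOnInterval g 0 a := by
    have hQ := (absolutelyContinuousOnInterval_Qf
      ((intervalIntegrable_iff_integrableOn_Icc_of_le ha.le).2 hq)).sub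
      (contDiffOn_const (c := Q0 a q)).absolutelyContinuousOnInterval
    simpa only [g, sq, Pi.sub_apply] using hQ.fun_mul hQ
  set K := 2 * (|g a| + ∫ x in (0:ℝ)..a, |deriv g x|)
  have hK : 0 ≤ K := by
    have : 0 ≤ ∫ x in (0:ℝ)..a, |deriv g x| :=
      integral_nonneg ha.le fun x _ => abs_nonneg (deriv g x)
    positivity
  refine ⟨K + 1, by linarith, fun m _ => ?_⟩
  have hR := norm_primitive_le_rho hq m
  have hrho : 0 ≤ rho a q m := by simpa using hR 0 ⟨le_rfl, ha.le⟩
  calc _ = ‖∫ x in (0:ℝ)..a, (g x : ℂ) * ((q x : ℂ) * e2 a (-(2*(m:ℤ)+2)) x)‖ := by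
        congr 1
        refine integral_congr fun x _ => ?_
        simp only [g]
        push_cast
        ring
    _ ≤ K * rho a q m := norm_integral_ofReal_mul_le_of_norm_primitive_le ha.le hg
        ((intervalIntegrable_iff_integrableOn_Icc_of_le ha.le).2 (integrableOn_mul_e2 hq _)) hR
    _ ≤ (K + 1) * rho a q m := mul_le_mul_of_nonneg_right (by linarith) hrho

/-- there is `C > 0` such that for every `m ≥ 1`,
`|∫₀^a (Q(x)−Q₀)² q(x) e^{−2(2m+2)π i x/a} dx| ≤ C ρ(m)`. -/
theorem statement13 (a : ℝ) (ha : 0 < a) (q : ℝ → ℝ)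
    (hq : MeasureTheory.IntegrableOn q (Set.Icc 0 a))
    (hper : ∀ x, q (x + a) = q x)
    (hc0 : fc a q 0 = 0) :
    ∃ C > (0:ℝ), ∀ m : ℕ, 1 ≤ m →
      ‖∫ x in (0:ℝ)..a, (((Qf a q x - Q0 a q : ℝ)) : ℂ)^2 * ((q x : ℝ) : ℂ)
          * e2 a (-(2*(m:ℤ)+2)) x‖
        ≤ C * rho a q m :=
  statement13_general a ha q hq
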